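/- arXiv:2602.04318 — 2 statements merged into one kernel-verified Lean document; each statement's English description precedes it below -/
import Mathlib

section
/- For all integers n ≥ 2, r ≥ 1, and u ≥ 0, the following identity of Stirling numbers of the second kind holds: Σ_{j=1}^{n−1} A_{n,j,r} · (n)_j · S₂(n−1+r+u, j) = (1/(n)^{(r)}) · Σ_{j=1}^{r} a_j^{(r)} · (n)_j · (n−j)^{n+r−1+u}, where (n)^{(r)} = n(n+1)⋯(n+r−1) is the rising factorial and (n)_j = n(n−1)⋯(n−j+1) is the falling factorial. -/
open Finset

/-- Stirling numbers of the second kind: `S₂(0,0) = 1`, `S₂(0,k) = 0` for `k ≥ 1`,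
`S₂(m+1,0) = 0`, and `S₂(m+1, k+1) = (k+1)·S₂(m, k+1) + S₂(m, k)`. -/
def stirling2 : ℕ → ℕ → ℕ
  | 0, 0 => 1
  | 0, _ + 1 => 0
  | _ + 1, 0 => 0
  | m + 1, k + 1 => (k + 1) * stirling2 m (k + 1) + stirling2 m k

/-- The coefficient `A_{n,j,r} = ((n−1)!/(n−1−j)!) · ((n−1+r−j)!/(n−1+r)!)`. -/
noncomputable def raoACoef (n j r : ℕ) : ℝ :=
  ((n - 1).factorial : ℝ) / ((n - 1 - j).factorial : ℝ) *
    (((n - 1 + r - j).factorial : ℝ) / ((n - 1 + r).factorial : ℝ))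

/-- The coefficients `a_j^{(r)}`, defined recursively by `a_r^{(r)} = 1`,
`a_1^{(r+1)} = (r+1) a_1^{(r)}`, and `a_j^{(r+1)} = (r+j) a_j^{(r)} + a_{j−1}^{(r)}`
for `j = 2, …, r`. -/
def raoA : ℕ → ℕ → ℕ
  | 0, _ => 0
  | 1, j => if j = 1 then 1 else 0
  | (r + 2), j =>
      if j = r + 2 then 1
      else if j = 1 then (r + 2) * raoA (r + 1) 1
      else (r + 1 + j) * raoA (r + 1) j + raoA (r + 1) (j - 1)

lemma raoA_zero_right (r : ℕ) : raoA r 0 = 0 := by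
  induction r using Nat.strong_induction_on with
  | _ r ih =>
    match r with
    | 0 => rfl
    | 1 => simp [raoA]
    | (s+2) => simp [raoA, ih (s+1) (by omega)]

lemma raoA_self (r : ℕ) (hr : 1 ≤ r) : raoA r r = 1 := by
  match r with
  | 1 => simp [raoA]
  | (s+2) => simp [raoA]

lemma raoA_gt (r j : ℕ) (h : r < j) : raoA r j = 0 := by
  induction r using Nat.strong_induction_on generalizing j with
  | _ r ih =>
    match r with
    | 0 => simp [raoA]
    | 1 => simp [raoA]; omega
    | (s+2) =>
      have h1 : j ≠ s + 2 := by omega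
      have h2 : j ≠ 1 := by omega
      simp [raoA, h1, h2, ih (s+1) (by omega) j (by omega : s+1 < j),
        ih (s+1) (by omega) (j-1) (by omega : s+1 < j-1)]

lemma raoA_rec (r m : ℕ) (hr : 1 ≤ r) (hm : 1 ≤ m) :
    raoA (r+1) m = (r + m) * raoA r m + raoA r (m-1) := by
  obtain ⟨s, rfl⟩ : ∃ s, r = s + 1 := ⟨r - 1, by omega⟩
  rcases eq_or_ne m (s+2) with h | h
  · subst h
    simp [raoA, raoA_gt (s+1) (s+2) (by omega), raoA_self (s+1) (by omega)]
  · rcases eq_or_ne m 1 with h1 | h1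
    · subst h1
      simp [raoA, raoA_zero_right]
    · show raoA (s+2) m = _
      simp only [raoA, if_neg h, if_neg h1]


noncomputable def Ufun (j M : ℕ) : ℝ :=
  ∑ i ∈ range (j+1), (-1 : ℝ)^i * (j.choose i) * (i:ℝ)^M

lemma choose_key (j i : ℕ) :
    i * (j+1).choose i + (j+1) * j.choose i = (j+1) * (j+1).choose i := by
  rcases le_or_gt i (j+1) with h | h
  · have h0 := Nat.choose_mul_succ_eq j i
    have h1 : (j+1) * j.choose i = (j+1).choose i * (j+1-i) := by
      rw [← h0]; ring
    have h2 : i + (j+1-i) = j+1 := by omega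
    calc i * (j+1).choose i + (j+1) * j.choose i
        = (j+1).choose i * i + (j+1).choose i * (j+1-i) := by rw [h1]; ring
      _ = (j+1).choose i * (i + (j+1-i)) := by rw [Nat.mul_add]
      _ = (j+1) * (j+1).choose i := by rw [h2]; ring
  · rw [Nat.choose_eq_zero_of_lt h, Nat.choose_eq_zero_of_lt (by omega)]
    simp

lemma Ufun_succ (j M : ℕ) :
    Ufun (j+1) (M+1) = (j+1) * Ufun (j+1) M - (j+1) * Ufun j M := by
  have key : ∀ i ∈ range (j+2), (-1:ℝ)^i * ((j+1).choose i) * (i:ℝ)^(M+1)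
      = ((j:ℝ)+1) * ((-1:ℝ)^i * ((j+1).choose i) * (i:ℝ)^M)
        - ((j:ℝ)+1) * ((-1:ℝ)^i * (j.choose i) * (i:ℝ)^M) := by
    intro i _
    have h : ((i : ℝ)) * ((j+1).choose i) + ((j:ℝ)+1) * (j.choose i)
        = ((j:ℝ)+1) * ((j+1).choose i) := by
      exact_mod_cast congrArg (Nat.cast : ℕ → ℝ) (choose_key j i)
    rw [pow_succ]
    linear_combination ((-1:ℝ)^i * (i:ℝ)^M) * h
  have h2 : ∑ i ∈ range (j+2), (-1:ℝ)^i * (j.choose i) * (i:ℝ)^M = Ufun j M := by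
    rw [sum_range_succ, Nat.choose_eq_zero_of_lt (by omega)]
    simp [Ufun]
  calc Ufun (j+1) (M+1)
      = ∑ i ∈ range (j+2), (((j:ℝ)+1) * ((-1:ℝ)^i * ((j+1).choose i) * (i:ℝ)^M)
        - ((j:ℝ)+1) * ((-1:ℝ)^i * (j.choose i) * (i:ℝ)^M)) := sum_congr rfl key
    _ = ((j:ℝ)+1) * (∑ i ∈ range (j+2), (-1:ℝ)^i * ((j+1).choose i) * (i:ℝ)^M)
        - ((j:ℝ)+1) * (∑ i ∈ range (j+2), (-1:ℝ)^i * (j.choose i) * (i:ℝ)^M) := by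
        rw [sum_sub_distrib, mul_sum, mul_sum]
    _ = ((j:ℝ)+1) * Ufun (j+1) M - ((j:ℝ)+1) * Ufun j M := by rw [h2]; rfl

lemma Ufun_stirling : ∀ M j, Ufun j M = (-1:ℝ)^j * j.factorial * stirling2 M j := by
  intro M
  induction M with
  | zero =>
    intro j
    have h0 : Ufun j 0 = ∑ i ∈ range (j+1), (-1:ℝ)^i * (j.choose i) := by
      simp [Ufun]
    have h := Int.alternating_sum_range_choose (n := j)
    have hcast : (∑ i ∈ range (j+1), (-1:ℝ)^i * (j.choose i))
        = ((if j = 0 then 1 else 0 : ℤ) : ℝ) := by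
      rw [← h]
      push_cast
      exact sum_congr rfl fun i _ => by ring
    rw [h0, hcast]
    rcases eq_or_ne j 0 with hj | hj
    · subst hj; simp [stirling2]
    · obtain ⟨k, rfl⟩ := Nat.exists_eq_succ_of_ne_zero hj
      simp [stirling2]
  | succ M ih =>
    intro j
    match j with
    | 0 =>
      simp [Ufun, stirling2]
    | (k+1) =>
      rw [Ufun_succ, ih (k+1), ih k]
      have hst : stirling2 (M+1) (k+1) = (k+1) * stirling2 M (k+1) + stirling2 M k := rfl
      rw [hst, Nat.factorial_succ]
      push_cast
      ring

lemma orth (m i : ℕ) :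
    ∑ j ∈ range (m+1), (-1:ℝ)^j * (m.choose j) * (j.choose i)
      = (if i = m then (-1:ℝ)^m else 0) := by
  rcases lt_or_ge m i with h | h
  · rw [if_neg (by omega)]
    apply sum_eq_zero
    intro j hj
    rw [mem_range] at hj
    rw [Nat.choose_eq_zero_of_lt (by omega : j < i)]
    simp
  · have hsub : Ico i (m+1) ⊆ range (m+1) := by
      intro x hx; rw [mem_range]; rw [mem_Ico] at hx; omega
    have hz : ∀ x ∈ range (m+1), x ∉ Ico i (m+1) →
        (-1:ℝ)^x * (m.choose x) * (x.choose i) = 0 := by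
      intro x hx hnx
      rw [mem_range] at hx; rw [mem_Ico] at hnx
      rw [Nat.choose_eq_zero_of_lt (by omega : x < i)]
      simp
    rw [← sum_subset hsub hz, sum_Ico_eq_sum_range]
    have hterm : ∀ t ∈ range (m+1-i), (-1:ℝ)^(i+t) * (m.choose (i+t)) * ((i+t).choose i)
        = ((-1:ℝ)^i * (m.choose i)) * ((-1:ℝ)^t * ((m-i).choose t)) := by
      intro t ht
      rw [mem_range] at ht
      have hc := Nat.choose_mul (n := m) (show i ≤ i+t by omega)
      have hc' : (m.choose (i+t) : ℝ) * ((i+t).choose i) = (m.choose i) * ((m-i).choose t) := by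
        have : i + t - i = t := by omega
        rw [this] at hc
        exact_mod_cast congrArg (Nat.cast : ℕ → ℝ) hc
      rw [pow_add]
      linear_combination ((-1:ℝ)^i * (-1:ℝ)^t) * hc'
    rw [sum_congr rfl hterm, ← mul_sum]
    have halt : ∑ t ∈ range (m+1-i), (-1:ℝ)^t * ((m-i).choose t)
        = (if m - i = 0 then 1 else 0) := by
      have h1 : m + 1 - i = (m - i) + 1 := by omega
      have h := Int.alternating_sum_range_choose (n := m - i)
      have : (∑ t ∈ range (m-i+1), (-1:ℝ)^t * ((m-i).choose t))
          = ((if m - i = 0 then 1 else 0 : ℤ) : ℝ) := by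
        rw [← h]; push_cast; exact sum_congr rfl fun t _ => by ring
      rw [h1, this]
      split <;> simp
    rw [halt]
    rcases eq_or_ne i m with he | he
    · subst he
      simp
    · rw [if_neg (by omega), if_neg he]
      simp


lemma fact_ne (k : ℕ) : ((k.factorial : ℝ)) ≠ 0 := by
  exact_mod_cast k.factorial_ne_zero

lemma raoACoef_succ (n j r : ℕ) (hn : 1 ≤ n) (hj : j ≤ n - 1) :
    raoACoef n j (r+1) * ((n:ℝ) + r) = raoACoef n j r * (((n:ℝ) + r) - j) := by
  unfold raoACoef
  have e1 : n - 1 + (r+1) - j = (n - 1 + r - j) + 1 := by omega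
  have e2 : n - 1 + (r+1) = (n - 1 + r) + 1 := by omega
  rw [e1, e2, Nat.factorial_succ, Nat.factorial_succ]
  have c1 : ((n - 1 + r - j : ℕ) : ℝ) + 1 = (n:ℝ) + r - j := by
    have h : ((n - 1 + r - j) + 1) + j = n + r := by omega
    have := congrArg (Nat.cast : ℕ → ℝ) h
    push_cast at this
    linarith
  have c2 : ((n - 1 + r : ℕ) : ℝ) + 1 = (n:ℝ) + r := by
    have h : (n - 1 + r) + 1 = n + r := by omega
    exact_mod_cast congrArg (Nat.cast : ℕ → ℝ) h
  push_cast [c1]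
  push_cast at c1 c2
  rw [c2]
  have h1 := fact_ne (n-1-j)
  have h2 := fact_ne (n-1+r)
  have h3 : ((n:ℝ) + r) ≠ 0 := by positivity
  field_simp

noncomputable def Fc (n r i : ℕ) : ℝ :=
  ∑ j ∈ Icc 1 (n-1), (-1:ℝ)^(j+i) * (j.choose i) *
    (raoACoef n j r * (n.descFactorial j : ℝ) / (j.factorial : ℝ))

lemma coef_one (n j : ℕ) (hn : 2 ≤ n) (h1 : 1 ≤ j) (hj : j ≤ n - 1) :
    raoACoef n j 1 * (n.descFactorial j : ℝ) / (j.factorial : ℝ) = ((n-1).choose j : ℝ) := by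
  have e1 : n - 1 + 1 - j = n - j := by omega
  have e2 : n - 1 + 1 = n := by omega
  have d1 : ((n-j).factorial : ℝ) * (n.descFactorial j : ℝ) = (n.factorial : ℝ) := by
    exact_mod_cast congrArg (Nat.cast : ℕ → ℝ)
      (Nat.factorial_mul_descFactorial (show j ≤ n by omega))
  have h3 : ((n-j).factorial : ℝ) / (n.factorial : ℝ) * (n.descFactorial j : ℝ) = 1 := by
    rw [div_mul_eq_mul_div, d1, div_self (fact_ne n)]
  unfold raoACoef
  rw [e1, e2, mul_assoc, h3, mul_one, Nat.cast_choose ℝ hj, div_div, mul_comm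
    ((n-1-j).factorial : ℝ) (j.factorial : ℝ)]

lemma Fc_one (n i : ℕ) (hn : 2 ≤ n) (hi : 1 ≤ i) :
    Fc n 1 i = if i = n-1 then 1 else 0 := by
  have h0 : Fc n 1 i = ∑ j ∈ Icc 1 (n-1), (-1:ℝ)^(j+i) * (j.choose i) * ((n-1).choose j) :=
    sum_congr rfl (fun j hj => by
      rw [mem_Icc] at hj; rw [coef_one n j hn hj.1 hj.2])
  rw [h0]
  have hsub : Icc 1 (n-1) ⊆ range ((n-1)+1) := by
    intro x hx; rw [mem_Icc] at hx; rw [mem_range]; omega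
  have hz : ∀ x ∈ range ((n-1)+1), x ∉ Icc 1 (n-1) →
      (-1:ℝ)^(x+i) * (x.choose i) * ((n-1).choose x) = 0 := by
    intro x hx hnx
    rw [mem_range] at hx; rw [mem_Icc] at hnx
    have hx0 : x = 0 := by omega
    subst hx0
    rw [Nat.choose_eq_zero_of_lt (by omega : 0 < i)]
    simp
  rw [sum_subset hsub hz]
  have hre : ∀ j ∈ range ((n-1)+1), (-1:ℝ)^(j+i) * (j.choose i) * ((n-1).choose j)
      = (-1:ℝ)^i * ((-1:ℝ)^j * ((n-1).choose j) * (j.choose i)) := fun j _ => by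
    rw [pow_add]; ring
  rw [sum_congr rfl hre, ← mul_sum, orth (n-1) i]
  rcases eq_or_ne i (n-1) with he | he
  · rw [if_pos he, if_pos he, he, ← pow_add]
    exact Even.neg_one_pow ⟨n-1, rfl⟩
  · rw [if_neg he, if_neg he, mul_zero]

lemma Fc_step (n r i : ℕ) (hn : 2 ≤ n) :
    Fc n (r+1) i * ((n:ℝ)+r) = (((n:ℝ)+r) - i) * Fc n r i + ((i:ℝ)+1) * Fc n r (i+1) := by
  unfold Fc
  rw [sum_mul, mul_sum, mul_sum, ← sum_add_distrib]
  apply sum_congr rfl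
  intro j hj
  rw [mem_Icc] at hj
  have hco := raoACoef_succ n j r (by omega) hj.2
  have hch : ((i:ℝ)+1) * (j.choose (i+1) : ℝ) = (j.choose i : ℝ) * ((j:ℝ) - i) := by
    rcases le_or_gt i j with h | h
    · have hc := congrArg (Nat.cast : ℕ → ℝ) (Nat.choose_succ_right_eq j i)
      push_cast [h] at hc
      linarith [hc]
    · rw [Nat.choose_eq_zero_of_lt h, Nat.choose_eq_zero_of_lt (by omega)]
      push_cast; ring
  linear_combination ((-1:ℝ)^(j+i) * (j.choose i) * ((n.descFactorial j : ℝ)/(j.factorial : ℝ))) * hco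
    + ((-1:ℝ)^(j+i) * raoACoef n j r * ((n.descFactorial j : ℝ)/(j.factorial : ℝ))) * hch

lemma Fc_key (n : ℕ) (hn : 2 ≤ n) :
    ∀ r, 1 ≤ r → ∀ i, 1 ≤ i →
      Fc n r i = (raoA r (n-i) : ℝ) * (n.descFactorial (n-i) : ℝ) / (n.ascFactorial r : ℝ) := by
  intro r hr
  induction r, hr using Nat.le_induction with
  | base =>
    intro i hi
    rw [Fc_one n i hn hi]
    have ha1 : n.ascFactorial 1 = n := by
      rw [Nat.ascFactorial_succ, Nat.ascFactorial_zero]; omega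
    rcases eq_or_ne i (n-1) with he | he
    · have h1 : n - i = 1 := by omega
      rw [if_pos he, h1, ha1]
      have : raoA 1 1 = 1 := by simp [raoA]
      rw [this, Nat.descFactorial_one]
      rw [Nat.cast_one, one_mul, div_self (by exact_mod_cast (by omega : n ≠ 0))]
    · have h1 : n - i ≠ 1 := by omega
      have : raoA 1 (n-i) = 0 := by simp [raoA, h1]
      rw [if_neg he, this]
      simp
  | succ r hr ih =>
    intro i hi
    have hnr : ((n:ℝ)+r) ≠ 0 := by positivity
    have hstep := Fc_step n r i hn
    have hF : Fc n (r+1) i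
        = ((((n:ℝ)+r) - i) * Fc n r i + ((i:ℝ)+1) * Fc n r (i+1)) / ((n:ℝ)+r) := by
      rw [eq_div_iff hnr]; exact hstep
    rw [hF, ih i hi, ih (i+1) (by omega)]
    have hascp : (0:ℝ) < (n.ascFactorial r : ℝ) := by
      have : 0 < n.ascFactorial r := by
        obtain ⟨m, rfl⟩ : ∃ m, n = m + 1 := ⟨n - 1, by omega⟩
        exact Nat.ascFactorial_pos m r
      exact_mod_cast this
    have hascs : ((n.ascFactorial (r+1) : ℕ) : ℝ) = ((n:ℝ)+r) * (n.ascFactorial r : ℝ) := by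
      have : n.ascFactorial (r+1) = (n + r) * n.ascFactorial r := Nat.ascFactorial_succ
      rw [this]; push_cast; ring
    have hrecR : (raoA (r+1) (n-i) : ℝ)
        = (((n:ℝ)+r) - i) * (raoA r (n-i) : ℝ) + (raoA r (n-i-1) : ℝ) := by
      rcases le_or_gt n i with h | h
      · have h0 : n - i = 0 := by omega
        rw [h0]
        simp [raoA_zero_right]
      · have h := raoA_rec r (n-i) hr (by omega)
        calc (raoA (r+1) (n-i) : ℝ)
            = (((r + (n-i)) * raoA r (n-i) + raoA r (n-i-1) : ℕ) : ℝ) := by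
              exact_mod_cast congrArg (Nat.cast : ℕ → ℝ) h
          _ = _ := by
              push_cast [Nat.cast_sub (show i ≤ n by omega)]
              ring
    have hid : (((n:ℝ)+r) - i) * ((raoA r (n-i) : ℝ) * (n.descFactorial (n-i) : ℝ))
        + ((i:ℝ)+1) * ((raoA r (n-(i+1)) : ℝ) * (n.descFactorial (n-(i+1)) : ℝ))
        = (raoA (r+1) (n-i) : ℝ) * (n.descFactorial (n-i) : ℝ) := by
      rcases le_or_gt n i with h | h
      · have h0 : n - i = 0 := by omega
        have h0' : n - (i+1) = 0 := by omega
        rw [h0, h0']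
        simp [raoA_zero_right]
      · have hm' : n - (i+1) = n - i - 1 := by omega
        have hd : (n.descFactorial (n-i) : ℝ) = ((i:ℝ)+1) * (n.descFactorial (n-i-1) : ℝ) := by
          have e : n - i = (n - i - 1) + 1 := by omega
          have e2 : n - (n-i-1) = i+1 := by omega
          conv_lhs => rw [e]
          rw [Nat.descFactorial_succ, e2]
          push_cast; ring
        rw [hm', hd]
        linear_combination (-(((i:ℝ)+1) * (n.descFactorial (n-i-1) : ℝ))) * hrecR
    rw [hascs]
    field_simp
    linear_combination hid


/-- For all `n ≥ 2`, `r ≥ 1`, `u ≥ 0`: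
`∑_{j=1}^{n−1} A_{n,j,r} (n)_j S₂(n−1+r+u, j)
  = (1/(n)^{(r)}) ∑_{j=1}^{r} a_j^{(r)} (n)_j (n−j)^{n+r−1+u}`. -/
theorem rao_I_closed_form (n r u : ℕ) (hn : 2 ≤ n) (hr : 1 ≤ r) :
    ∑ j ∈ Finset.Icc 1 (n - 1),
        raoACoef n j r * (n.descFactorial j : ℝ) * (stirling2 (n - 1 + r + u) j : ℝ) =
      (1 / (n.ascFactorial r : ℝ)) *
        ∑ j ∈ Finset.Icc 1 r,
          (raoA r j : ℝ) * (n.descFactorial j : ℝ) * ((n : ℝ) - (j : ℝ)) ^ (n + r - 1 + u) := by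
  set M := n - 1 + r + u with hMdef
  have hM : M ≠ 0 := by omega
  have hMe : n + r - 1 + u = M := by omega
  rw [hMe]
  -- Step A: expand each stirling number
  have expand : ∀ j ∈ Icc 1 (n-1),
      raoACoef n j r * (n.descFactorial j : ℝ) * (stirling2 M j : ℝ)
      = ∑ i ∈ range n, (-1:ℝ)^(j+i) * (j.choose i) *
          (raoACoef n j r * (n.descFactorial j : ℝ) / (j.factorial : ℝ)) * (i:ℝ)^M := by
    intro j hj
    rw [mem_Icc] at hj
    have heven : ((-1:ℝ)^j) * ((-1:ℝ)^j) = 1 := by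
      rw [← pow_add]; exact Even.neg_one_pow ⟨j, rfl⟩
    have hS : (stirling2 M j : ℝ) = (-1:ℝ)^j / (j.factorial : ℝ) * Ufun j M := by
      rw [Ufun_stirling M j, div_mul_eq_mul_div, eq_div_iff (fact_ne j)]
      linear_combination (-((j.factorial : ℝ) * (stirling2 M j : ℝ))) * heven
    have h1 : raoACoef n j r * (n.descFactorial j : ℝ) * (stirling2 M j : ℝ)
        = ∑ i ∈ range (j+1), (-1:ℝ)^(j+i) * (j.choose i) *
            (raoACoef n j r * (n.descFactorial j : ℝ) / (j.factorial : ℝ)) * (i:ℝ)^M := by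
      rw [hS, Ufun, Finset.mul_sum, Finset.mul_sum]
      exact sum_congr rfl fun i _ => by rw [pow_add]; ring
    rw [h1]
    apply sum_subset (by intro x hx; rw [mem_range] at *; omega)
    intro x hx hnx
    rw [mem_range] at hx hnx
    rw [Nat.choose_eq_zero_of_lt (by omega)]
    simp
  rw [sum_congr rfl expand, Finset.sum_comm]
  -- Step B: inner sums are Fc * i^M
  have hFc : ∀ i ∈ range n,
      (∑ j ∈ Icc 1 (n-1), (-1:ℝ)^(j+i) * (j.choose i) *
        (raoACoef n j r * (n.descFactorial j : ℝ) / (j.factorial : ℝ)) * (i:ℝ)^M)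
      = Fc n r i * (i:ℝ)^M := by
    intro i _
    rw [Fc, sum_mul]
  rw [sum_congr rfl hFc]
  -- Step C: restrict to Icc 1 (n-1)
  have hres : ∑ i ∈ range n, Fc n r i * (i:ℝ)^M
      = ∑ i ∈ Icc 1 (n-1), Fc n r i * (i:ℝ)^M := by
    refine (sum_subset (by intro x hx; rw [mem_Icc] at hx; rw [mem_range]; omega) ?_).symm
    intro x hx hnx
    rw [mem_range] at hx
    rw [mem_Icc] at hnx
    have hx0 : x = 0 := by omega
    subst hx0
    rw [Nat.cast_zero, zero_pow hM, mul_zero]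
  rw [hres]
  -- Step D: apply key lemma
  have hkey : ∀ i ∈ Icc 1 (n-1), Fc n r i * (i:ℝ)^M
      = (1 / (n.ascFactorial r : ℝ)) *
        ((raoA r (n-i) : ℝ) * (n.descFactorial (n-i) : ℝ) * (i:ℝ)^M) := by
    intro i hi
    rw [mem_Icc] at hi
    rw [Fc_key n hn r hr i hi.1]
    ring
  rw [sum_congr rfl hkey, ← Finset.mul_sum]
  -- Step E: transform RHS
  congr 1
  have hswap : ∑ j ∈ Icc 1 r, (raoA r j : ℝ) * (n.descFactorial j : ℝ) * ((n:ℝ)-(j:ℝ))^M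
      = ∑ j ∈ Icc 1 (n-1), (raoA r j : ℝ) * (n.descFactorial j : ℝ) * ((n:ℝ)-(j:ℝ))^M := by
    rcases le_or_gt r (n-1) with h | h
    · apply sum_subset (Icc_subset_Icc_right h)
      intro x hx hnx
      rw [mem_Icc] at hx hnx
      rw [raoA_gt r x (by omega)]
      simp
    · refine (sum_subset (Icc_subset_Icc_right (by omega)) ?_).symm
      intro x hx hnx
      rw [mem_Icc] at hx hnx
      rcases eq_or_lt_of_le (show n ≤ x by omega) with he | hgt
      · rw [← he, sub_self, zero_pow hM, mul_zero]
      · rw [Nat.descFactorial_eq_zero_iff_lt.mpr hgt]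
        simp
  have hreindex : ∑ j ∈ Icc 1 (n-1), (raoA r j : ℝ) * (n.descFactorial j : ℝ) * ((n:ℝ)-(j:ℝ))^M
      = ∑ i ∈ Icc 1 (n-1), (raoA r (n-i) : ℝ) * (n.descFactorial (n-i) : ℝ) * (i:ℝ)^M := by
    apply Finset.sum_nbij' (fun j => n - j) (fun i => n - i)
    · intro a ha; rw [mem_Icc] at *; omega
    · intro a ha; rw [mem_Icc] at *; omega
    · intro a ha; rw [mem_Icc] at ha; omega
    · intro a ha; rw [mem_Icc] at ha; omega
    · intro a ha
      rw [mem_Icc] at ha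
      have e1 : n - (n - a) = a := by omega
      have e2 : ((n - a : ℕ) : ℝ) = (n:ℝ) - (a:ℝ) := by
        rw [Nat.cast_sub (by omega)]
      rw [e1, e2]
  rw [← hreindex, ← hswap]
end

section
/- For all integers n ≥ 2, r ≥ 1, and u ≥ 0, the quantity I_{n,r,u} satisfies the recursion I_{n, r+1, u} = I_{n, r, u+1} − (1/(n+r)) · I_{n, r, u+2} + (n/(n+r)) · ((n−1)/(n+r−1)) · I_{n−1, r, u+2}, where for n = 2 the last term is interpreted using I_{1, r, u+2} = 0. -/
set_option maxHeartbeats 1000000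


open Finset

/-- `I_{n,r,u} = ∑_{j=1}^{n−1} A_{n,j,r} (n)_j S₂(n−1+r+u, j)`; in particular the
empty sum gives `I_{1,r,u} = 0`. -/
noncomputable def raoI (n r u : ℕ) : ℝ :=
  ∑ j ∈ Finset.Icc 1 (n - 1),
    raoACoef n j r * (n.descFactorial j : ℝ) * (stirling2 (n - 1 + r + u) j : ℝ)

lemma fact_div_eq_desc {n k : ℕ} (h : k ≤ n) :
    ((n.factorial : ℝ)) / ((n - k).factorial : ℝ) = (n.descFactorial k : ℝ) := by
  have h1 : ((n - k).factorial : ℝ) * (n.descFactorial k : ℝ) = (n.factorial : ℝ) := by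
    exact_mod_cast congrArg (Nat.cast (R := ℝ)) (Nat.factorial_mul_descFactorial h)
  have h2 : ((n - k).factorial : ℝ) ≠ 0 := by positivity
  field_simp [← h1]
  exact h1.symm

lemma raoACoef_eq {n j r : ℕ} (h : j ≤ n - 1) :
    raoACoef n j r = ((n - 1).descFactorial j : ℝ) / (((n - 1 + r).descFactorial j : ℝ)) := by
  have h2 : j ≤ n - 1 + r := le_trans h (Nat.le_add_right _ _)
  unfold raoACoef
  rw [fact_div_eq_desc h, ← fact_div_eq_desc h2]
  have p1 : (((n - 1 + r) - j).factorial : ℝ) ≠ 0 := by positivity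
  have p2 : ((n - 1 + r).factorial : ℝ) ≠ 0 := by positivity
  field_simp

lemma desc_ne_zero {n k : ℕ} (h : k ≤ n) : ((n.descFactorial k : ℕ) : ℝ) ≠ 0 := by
  have : n.descFactorial k ≠ 0 := by
    simp only [ne_eq, Nat.descFactorial_eq_zero_iff_lt]
    omega
  exact_mod_cast this

lemma rao_core (m r i P Q X P' Q' d : ℝ)
    (hQ : Q ≠ 0) (hX : X ≠ 0) (hQ' : Q' ≠ 0)
    (c1 : m + 2 + r ≠ 0) (c2 : m + 1 + r ≠ 0) (c3 : m + 1 ≠ 0)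
    (c4 : m + r + 1 - i ≠ 0) (c5 : m + r - i ≠ 0) (c6 : m + 1 - i ≠ 0)
    (c7 : (m : ℝ) + 2 ≠ 0)
    (e1 : (m + 1) * P' = (m - i) * P)
    (e2 : (m + 1 + r) * Q' = (m + r - i) * Q)
    (e3 : (m + r + 1 - i) * X = (m + 2 + r) * Q)
    (e4 : (m + 1 - i) * d = (m + 2) * P) :
    P / X * d =
      P / Q * d -
        (1 / (m + 2 + r)) *
          ((1 + i) * (P / Q * d) + ((m - i) * P) / ((m + r - i) * Q) * ((m + 1 - i) * d)) +
        ((m + 2) / (m + 2 + r)) * ((m + 1) / (m + 1 + r)) * (P' / Q' * P) := by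
  have t1 : P / X * d = ((m + r + 1 - i) / (m + 2 + r)) * (P * d / Q) := by
    field_simp
    linear_combination (-(P * d)) * e3
  have t3 : ((m - i) * P) / ((m + r - i) * Q) * ((m + 1 - i) * d)
      = ((m - i) * (m + 1 - i) / (m + r - i)) * (P * d / Q) := by
    field_simp
  have t4 : P' / Q' * P
      = ((m - i) * (m + 1 + r) * (m + 1 - i) / ((m + 1) * (m + r - i) * (m + 2)))
          * (P * d / Q) := by
    have hP' : P' = (m - i) * P / (m + 1) := by field_simp; linear_combination e1
    have hQ'e : Q' = (m + r - i) * Q / (m + 1 + r) := by field_simp; linear_combination e2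
    have hde : d = (m + 2) * P / (m + 1 - i) := by field_simp; linear_combination e4
    rw [hP', hQ'e, hde]
    field_simp
  have hy : P / Q * d = P * d / Q := by ring
  have hA : (m + r + 1 - i) / (m + 2 + r)
      = 1 - (1 / (m + 2 + r)) * ((1 + i) + (m - i) * (m + 1 - i) / (m + r - i))
        + ((m + 2) / (m + 2 + r)) * ((m + 1) / (m + 1 + r)) *
          ((m - i) * (m + 1 + r) * (m + 1 - i) / ((m + 1) * (m + r - i) * (m + 2))) := by
    field_simp
    ring
  rw [t1, t3, t4, hy]
  linear_combination (P * d / Q) * hA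

lemma rao_term (m r i : ℕ) (hi : i < m) :
    raoACoef (m + 2) (1 + i) (r + 1) * ((m + 2).descFactorial (1 + i) : ℝ) =
      raoACoef (m + 2) (1 + i) r * ((m + 2).descFactorial (1 + i) : ℝ) -
        (1 / ((m : ℝ) + 2 + r)) *
          ((1 + (i : ℝ)) * (raoACoef (m + 2) (1 + i) r * ((m + 2).descFactorial (1 + i) : ℝ)) +
            raoACoef (m + 2) (2 + i) r * ((m + 2).descFactorial (2 + i) : ℝ)) +
        (((m : ℝ) + 2) / ((m : ℝ) + 2 + r)) * (((m : ℝ) + 1) / ((m : ℝ) + 1 + r)) *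
          (raoACoef (m + 1) (1 + i) r * ((m + 1).descFactorial (1 + i) : ℝ)) := by
  have him : (i : ℝ) < m := by exact_mod_cast hi
  have hr0 : (0 : ℝ) ≤ r := Nat.cast_nonneg r
  rw [raoACoef_eq (n := m + 2) (j := 1 + i) (r := r + 1) (by omega),
      raoACoef_eq (n := m + 2) (j := 1 + i) (r := r) (by omega),
      raoACoef_eq (n := m + 2) (j := 2 + i) (r := r) (by omega),
      raoACoef_eq (n := m + 1) (j := 1 + i) (r := r) (by omega)]
  simp only [show m + 2 - 1 = m + 1 by omega, show m + 1 - 1 = m by omega,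
    show m + 1 + (r + 1) = m + 2 + r by omega]
  have hP2 : (((m + 1).descFactorial (2 + i) : ℕ) : ℝ)
      = ((m : ℝ) - i) * (((m + 1).descFactorial (1 + i) : ℕ) : ℝ) := by
    rw [show 2 + i = (1 + i) + 1 by omega, Nat.descFactorial_succ, Nat.cast_mul,
      show m + 1 - (1 + i) = m - i by omega, Nat.cast_sub hi.le]
  have hQ2 : (((m + 1 + r).descFactorial (2 + i) : ℕ) : ℝ)
      = ((m : ℝ) + r - i) * (((m + 1 + r).descFactorial (1 + i) : ℕ) : ℝ) := by
    rw [show 2 + i = (1 + i) + 1 by omega, Nat.descFactorial_succ, Nat.cast_mul,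
      show m + 1 + r - (1 + i) = m + r - i by omega, Nat.cast_sub (by omega)]
    push_cast
    ring
  have hd2 : (((m + 2).descFactorial (2 + i) : ℕ) : ℝ)
      = ((m : ℝ) + 1 - i) * (((m + 2).descFactorial (1 + i) : ℕ) : ℝ) := by
    rw [show 2 + i = (1 + i) + 1 by omega, Nat.descFactorial_succ, Nat.cast_mul,
      show m + 2 - (1 + i) = m + 1 - i by omega, Nat.cast_sub (by omega)]
    push_cast
    ring
  rw [hP2, hQ2, hd2]
  refine rao_core (m : ℝ) (r : ℝ) (i : ℝ) _ _ _ _ _ _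
    (desc_ne_zero (by omega)) (desc_ne_zero (by omega)) (desc_ne_zero (by omega))
    (by positivity) (by positivity) (by positivity)
    (by intro h; linarith) (by intro h; linarith) (by intro h; linarith)
    (by positivity) ?_ ?_ ?_ ?_
  · -- e1
    have h := Nat.succ_descFactorial m (1 + i)
    rw [show m + 1 - (1 + i) = m - i by omega] at h
    have h' := congrArg (Nat.cast (R := ℝ)) h
    push_cast [Nat.cast_sub hi.le] at h'
    linear_combination -h'
  · -- e2
    have h := Nat.succ_descFactorial (m + r) (1 + i)
    rw [show m + r + 1 - (1 + i) = m + r - i by omega,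
      show m + r + 1 = m + 1 + r by omega] at h
    have h' := congrArg (Nat.cast (R := ℝ)) h
    push_cast [Nat.cast_sub (show i ≤ m + r by omega)] at h'
    linear_combination -h'
  · -- e3
    have h := Nat.succ_descFactorial (m + 1 + r) (1 + i)
    rw [show m + 1 + r + 1 - (1 + i) = m + 1 + r - i by omega,
      show m + 1 + r + 1 = m + 2 + r by omega] at h
    have h' := congrArg (Nat.cast (R := ℝ)) h
    push_cast [Nat.cast_sub (show i ≤ m + 1 + r by omega)] at h'
    linear_combination h'
  · -- e4
    have h := Nat.succ_descFactorial (m + 1) (1 + i)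
    rw [show m + 1 + 1 - (1 + i) = m + 1 - i by omega,
      show m + 1 + 1 = m + 2 by omega] at h
    have h' := congrArg (Nat.cast (R := ℝ)) h
    push_cast [Nat.cast_sub (show i ≤ m + 1 by omega)] at h'
    linear_combination h'

lemma rao_bd (m r : ℕ) :
    raoACoef (m + 2) (1 + m) (r + 1) * ((m + 2).descFactorial (1 + m) : ℝ) =
      raoACoef (m + 2) (1 + m) r * ((m + 2).descFactorial (1 + m) : ℝ) -
        (1 / ((m : ℝ) + 2 + r)) *
          ((1 + (m : ℝ)) * (raoACoef (m + 2) (1 + m) r * ((m + 2).descFactorial (1 + m) : ℝ))) := by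
  rw [raoACoef_eq (n := m + 2) (j := 1 + m) (r := r + 1) (by omega),
      raoACoef_eq (n := m + 2) (j := 1 + m) (r := r) (by omega)]
  simp only [show m + 2 - 1 = m + 1 by omega, show m + 1 + (r + 1) = m + 2 + r by omega]
  have hQ : (((m + 1 + r).descFactorial (1 + m) : ℕ) : ℝ) ≠ 0 := desc_ne_zero (by omega)
  have hX : (((m + 2 + r).descFactorial (1 + m) : ℕ) : ℝ) ≠ 0 := desc_ne_zero (by omega)
  have e3 : ((r : ℝ) + 1) * (((m + 2 + r).descFactorial (1 + m) : ℕ) : ℝ)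
      = ((m : ℝ) + 2 + r) * (((m + 1 + r).descFactorial (1 + m) : ℕ) : ℝ) := by
    have h := Nat.succ_descFactorial (m + 1 + r) (1 + m)
    rw [show m + 1 + r + 1 - (1 + m) = r + 1 by omega,
      show m + 1 + r + 1 = m + 2 + r by omega] at h
    have h' := congrArg (Nat.cast (R := ℝ)) h
    push_cast at h'
    linear_combination h'
  have hc : ((m : ℝ) + 2 + r) ≠ 0 := by positivity
  set P := (((m + 1).descFactorial (1 + m) : ℕ) : ℝ)
  set Q := (((m + 1 + r).descFactorial (1 + m) : ℕ) : ℝ)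
  set X := (((m + 2 + r).descFactorial (1 + m) : ℕ) : ℝ)
  set d := (((m + 2).descFactorial (1 + m) : ℕ) : ℝ)
  field_simp
  linear_combination (-(P * d)) * e3

/-- For all `n ≥ 2`, `r ≥ 1`, `u ≥ 0`:
`I_{n,r+1,u} = I_{n,r,u+1} − (1/(n+r)) I_{n,r,u+2} + (n/(n+r)) ((n−1)/(n+r−1)) I_{n−1,r,u+2}`
(for `n = 2` the last term is interpreted using `I_{1,r,u+2} = 0`). -/
theorem rao_I_recursion (n r u : ℕ) (hn : 2 ≤ n) (hr : 1 ≤ r) :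
    raoI n (r + 1) u =
      raoI n r (u + 1) - (1 / ((n : ℝ) + (r : ℝ))) * raoI n r (u + 2) +
        ((n : ℝ) / ((n : ℝ) + (r : ℝ))) * (((n : ℝ) - 1) / ((n : ℝ) + (r : ℝ) - 1)) *
          raoI (n - 1) r (u + 2) := by
  obtain ⟨m, rfl⟩ : ∃ m, n = m + 2 := ⟨n - 2, by omega⟩
  unfold raoI
  simp only [show m + 2 - 1 = m + 1 by omega, show m + 1 - 1 = m by omega,
    show m + 1 + (r + 1) + u = m + 2 + r + u by omega,
    show m + 1 + r + (u + 1) = m + 2 + r + u by omega,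
    show m + 1 + r + (u + 2) = m + 2 + r + u + 1 by omega,
    show m + r + (u + 2) = m + 2 + r + u by omega]
  rw [show Finset.Icc 1 (m + 1) = Finset.Ico 1 (m + 2) by exact (Finset.Ico_add_one_right_eq_Icc (a := 1) (b := m + 1)).symm,
    show Finset.Icc 1 m = Finset.Ico 1 (m + 1) by rw [Finset.Ico_add_one_right_eq_Icc],
    Finset.sum_Ico_eq_sum_range, Finset.sum_Ico_eq_sum_range,
    Finset.sum_Ico_eq_sum_range, Finset.sum_Ico_eq_sum_range]
  simp only [show m + 2 - 1 = m + 1 by omega, show m + 1 - 1 = m by omega]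
  push_cast
  have hstir : ∀ i : ℕ, (stirling2 (m + 2 + r + u + 1) (1 + i) : ℝ)
      = (1 + (i : ℝ)) * (stirling2 (m + 2 + r + u) (1 + i) : ℝ)
        + (stirling2 (m + 2 + r + u) i : ℝ) := by
    intro i
    rw [show 1 + i = i + 1 by omega]
    rw [show stirling2 (m + 2 + r + u + 1) (i + 1)
      = (i + 1) * stirling2 (m + 2 + r + u) (i + 1) + stirling2 (m + 2 + r + u) i from rfl]
    push_cast
    ring
  have hsplit : (∑ i ∈ range (m + 1),
        raoACoef (m + 2) (1 + i) r * ((m + 2).descFactorial (1 + i) : ℝ) *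
          (stirling2 (m + 2 + r + u + 1) (1 + i) : ℝ))
      = (∑ i ∈ range (m + 1), (1 + (i : ℝ)) *
          (raoACoef (m + 2) (1 + i) r * ((m + 2).descFactorial (1 + i) : ℝ) *
            (stirling2 (m + 2 + r + u) (1 + i) : ℝ)))
        + ∑ i ∈ range m,
            raoACoef (m + 2) (2 + i) r * ((m + 2).descFactorial (2 + i) : ℝ) *
              (stirling2 (m + 2 + r + u) (1 + i) : ℝ) := by
    have h1 : (∑ i ∈ range (m + 1),
        raoACoef (m + 2) (1 + i) r * ((m + 2).descFactorial (1 + i) : ℝ) *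
          (stirling2 (m + 2 + r + u + 1) (1 + i) : ℝ))
        = ∑ i ∈ range (m + 1), ((1 + (i : ℝ)) *
          (raoACoef (m + 2) (1 + i) r * ((m + 2).descFactorial (1 + i) : ℝ) *
            (stirling2 (m + 2 + r + u) (1 + i) : ℝ))
          + raoACoef (m + 2) (1 + i) r * ((m + 2).descFactorial (1 + i) : ℝ) *
            (stirling2 (m + 2 + r + u) i : ℝ)) := by
      refine Finset.sum_congr rfl fun i _ => ?_
      rw [hstir i]
      ring
    rw [h1, Finset.sum_add_distrib]
    congr 1
    rw [Finset.sum_range_succ']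
    have h0 : (stirling2 (m + 2 + r + u) 0 : ℝ) = 0 := by
      rw [show m + 2 + r + u = (m + 1 + r + u) + 1 by omega]
      norm_num [stirling2]
    rw [h0]
    rw [mul_zero, add_zero]
    refine Finset.sum_congr rfl fun i _ => ?_
    rw [show 1 + (i + 1) = 2 + i by omega, show i + 1 = 1 + i by omega]
  rw [hsplit]
  simp only [Finset.sum_range_succ]
  have hterm : ∀ i ∈ range m,
      raoACoef (m + 2) (1 + i) (r + 1) * ((m + 2).descFactorial (1 + i) : ℝ) *
          (stirling2 (m + 2 + r + u) (1 + i) : ℝ)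
        = raoACoef (m + 2) (1 + i) r * ((m + 2).descFactorial (1 + i) : ℝ) *
            (stirling2 (m + 2 + r + u) (1 + i) : ℝ)
          - (1 / ((m : ℝ) + 2 + r)) *
              ((1 + (i : ℝ)) * (raoACoef (m + 2) (1 + i) r *
                  ((m + 2).descFactorial (1 + i) : ℝ) *
                  (stirling2 (m + 2 + r + u) (1 + i) : ℝ))
                + raoACoef (m + 2) (2 + i) r * ((m + 2).descFactorial (2 + i) : ℝ) *
                  (stirling2 (m + 2 + r + u) (1 + i) : ℝ))
          + (((m : ℝ) + 2) / ((m : ℝ) + 2 + r)) * (((m : ℝ) + 1) / ((m : ℝ) + 1 + r)) *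
              (raoACoef (m + 1) (1 + i) r * ((m + 1).descFactorial (1 + i) : ℝ) *
                (stirling2 (m + 2 + r + u) (1 + i) : ℝ)) := by
    intro i hi
    rw [Finset.mem_range] at hi
    linear_combination (stirling2 (m + 2 + r + u) (1 + i) : ℝ) * rao_term m r i hi
  have hsum2 : (∑ i ∈ range m,
        raoACoef (m + 2) (1 + i) (r + 1) * ((m + 2).descFactorial (1 + i) : ℝ) *
          (stirling2 (m + 2 + r + u) (1 + i) : ℝ))
      = (∑ i ∈ range m,
          raoACoef (m + 2) (1 + i) r * ((m + 2).descFactorial (1 + i) : ℝ) *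
            (stirling2 (m + 2 + r + u) (1 + i) : ℝ))
        - (1 / ((m : ℝ) + 2 + r)) *
            ((∑ i ∈ range m, (1 + (i : ℝ)) *
                (raoACoef (m + 2) (1 + i) r * ((m + 2).descFactorial (1 + i) : ℝ) *
                  (stirling2 (m + 2 + r + u) (1 + i) : ℝ)))
              + ∑ i ∈ range m,
                  raoACoef (m + 2) (2 + i) r * ((m + 2).descFactorial (2 + i) : ℝ) *
                    (stirling2 (m + 2 + r + u) (1 + i) : ℝ))
        + (((m : ℝ) + 2) / ((m : ℝ) + 2 + r)) * (((m : ℝ) + 1) / ((m : ℝ) + 1 + r)) *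
            ∑ i ∈ range m,
              raoACoef (m + 1) (1 + i) r * ((m + 1).descFactorial (1 + i) : ℝ) *
                (stirling2 (m + 2 + r + u) (1 + i) : ℝ) := by
    rw [Finset.sum_congr rfl hterm]
    rw [Finset.sum_add_distrib, Finset.sum_sub_distrib, ← Finset.mul_sum,
      ← Finset.mul_sum, Finset.sum_add_distrib]
  have hb := rao_bd m r
  linear_combination hsum2 + (stirling2 (m + 2 + r + u) (1 + m) : ℝ) * hb
end
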